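/- For all integers a ≥ 0, k ≥ 1, and n ≥ 0, the number of (a, 2k−1)-sequences Δ with |Δ| = 2n equals the number of ordered pairs (μ, ν) of partitions such that every part of μ is at most k − 1, every part of ν is at most a + k, and |μ| + |ν| + k(a + k) = n. -/

import Mathlib

/-- The `i`-th entry (1-indexed) of a list of naturals, defaulting to `0`. -/
def entry (d : List ℕ) (i : ℕ) : ℕ := d.getD (i - 1) 0

/-- The alternating partial sum `∑_{i=1}^{m} (−1)^i d_i` of a list `d`. -/
def altSum (d : List ℕ) (m : ℕ) : ℤ :=
  ∑ i ∈ Finset.Icc 1 m, (-1 : ℤ) ^ i * (entry d i : ℤ)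

/-- `d = (d_1, …, d_l)` is an `(a,b)`-sequence: it is a list of positive integers with
`l ≥ b ≥ 1`, `d_i = a + i` for `1 ≤ i ≤ b`, `d_b ≥ d_{b+1} ≥ ⋯ ≥ d_l ≥ 1`, and
`∑_{i=1}^{l} (−1)^i d_i = 0`. -/
def IsABSeq (a b : ℕ) (d : List ℕ) : Prop :=
  1 ≤ b ∧ b ≤ d.length ∧
  (∀ i, 1 ≤ i → i ≤ d.length → 1 ≤ entry d i) ∧
  (∀ i, 1 ≤ i → i ≤ b → entry d i = a + i) ∧
  (∀ i j, b ≤ i → i ≤ j → j ≤ d.length → entry d j ≤ entry d i) ∧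
  altSum d d.length = 0

/-- An (ordinary) partition, recorded as a weakly decreasing list of positive parts. -/
def IsPartitionList (L : List ℕ) : Prop :=
  L.Pairwise (· ≥ ·) ∧ ∀ x ∈ L, 0 < x

/-- A strict partition: a strictly decreasing list of positive parts. -/
def IsStrictPartition (L : List ℕ) : Prop :=
  L.Pairwise (· > ·) ∧ ∀ x ∈ L, 0 < x

/-- The column sequence of the shifted Young diagram of a strict partition `L`:
`colSeq L j = #{ i : 1 ≤ i ≤ m, i ≤ j ≤ λ_i + i − 1 }`. -/
def colSeq (L : List ℕ) (j : ℕ) : ℕ :=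
  ((Finset.Icc 1 L.length).filter (fun i => i ≤ j ∧ j ≤ entry L i + i - 1)).card

/-- The BG-rank of a partition: the number of odd-indexed odd parts minus
the number of even-indexed odd parts (indices starting at 1). -/
def bgRank (L : List ℕ) : ℤ :=
  (((Finset.Icc 1 L.length).filter (fun i => Odd i ∧ Odd (entry L i))).card : ℤ) -
  (((Finset.Icc 1 L.length).filter (fun i => Even i ∧ Odd (entry L i))).card : ℤ)

/-- `qj j n`: the number of strict partitions of `n` whose BG-rank equals `j`. -/
noncomputable def qj (j : ℤ) (n : ℕ) : ℕ :=
  Set.ncard {L : List ℕ | IsStrictPartition L ∧ L.sum = n ∧ bgRank L = j}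

/-!
Stripping the forced prefix `(a + 1, …, a + b)` from an `(a, b)`-sequence `Δ` with `b = 2k − 1`
leaves a partition `e` with parts at most `a + b` whose alternating sum `e₁ − e₂ + e₃ − ⋯` is
`a + k`, and `|Δ| = b (a + k) + |e|`. Conjugation turns the bound on the parts into a bound on the
number of parts, and the alternating sum into the number of odd parts. Writing the even parts of
the conjugate `f` as `2u` and its `a + k` odd parts as `2v + 1` splits `f` into partitions
`(u, v)` (the zeros among the `v` are dropped) with at most `k − 1` and at most `a + k` parts and
`|f| = 2 (|u| + |v|) + a + k`. Conjugating `u` and `v` gives the pair `(μ, ν)`.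
-/

namespace List

lemma le_headD_of_mem {e : List ℕ} (he : e.Pairwise (· ≥ ·)) {x : ℕ} (hx : x ∈ e) :
    x ≤ e.headD 0 := by
  cases e with
  | nil => simp at hx
  | cons y ys => exact (mem_cons.mp hx).elim (·.le) (rel_of_pairwise_cons he)

lemma getD_le_headD {e : List ℕ} (he : e.Pairwise (· ≥ ·)) (i : ℕ) : e.getD i 0 ≤ e.headD 0 := by
  rcases lt_or_ge i e.length with h | h
  · rw [getD_eq_getElem _ _ h]
    exact le_headD_of_mem he (getElem_mem h)
  · rw [getD_eq_default _ _ h]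
    exact Nat.zero_le _

lemma headD_le_iff {e : List ℕ} (he : e.Pairwise (· ≥ ·)) {N : ℕ} :
    e.headD 0 ≤ N ↔ ∀ x ∈ e, x ≤ N := by
  refine ⟨fun h x hx => (le_headD_of_mem he hx).trans h, fun h => ?_⟩
  cases e with
  | nil => simp
  | cons y ys => exact h y mem_cons_self

lemma sum_map_ite_eq_countP {α : Type*} (l : List α) (p : α → Bool) :
    (l.map fun x => if p x then 1 else 0).sum = l.countP p := by
  induction l with
  | nil => simp
  | cons y l ih => simp [countP_cons, ih, add_comm]

lemma countP_lt_range (m N : ℕ) : (range N).countP (· < m) = min m N := by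
  induction N with
  | zero => simp
  | succ N ih => rw [range_succ, countP_append, ih]; by_cases h : N < m <;> simp [h] <;> omega

lemma filter_pos_append_replicate {w : List ℕ} (hw : w.Pairwise (· ≥ ·)) :
    w.filter (0 < ·) ++ replicate (w.length - (w.filter (0 < ·)).length) 0 = w := by
  have hzeros : w.filter (fun x => !decide (0 < x)) =
      replicate (w.length - (w.filter (0 < ·)).length) 0 := by
    refine eq_replicate_iff.mpr ⟨?_, fun x hx => by simpa using (mem_filter.mp hx).2⟩
    rw [← countP_eq_length_filter, ← countP_eq_length_filter,
      length_eq_countP_add_countP (0 < ·) (l := w)]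
    simp [Nat.pos_iff_ne_zero]
  rw [← hzeros]
  refine (filter_append_perm _ w).eq_of_pairwise' ?_ hw
  refine pairwise_append.mpr ⟨hw.filter _, hw.filter _, fun x _ y hy => ?_⟩
  simp only [mem_filter, Bool.not_eq_eq_eq_not, Bool.not_true, decide_eq_false_iff_not, not_lt,
    Nat.le_zero] at hy
  omega

lemma pairwise_ge_mergeSort (l : List ℕ) : (l.mergeSort fun x y => y ≤ x).Pairwise (· ≥ ·) :=
  (pairwise_mergeSort (fun _ _ _ h₁ h₂ => by simp at *; omega) (fun _ _ => by simp; omega) l).imp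
    (by simp)

lemma filter_eq_of_perm_append {L l₁ l₂ : List ℕ} {p : ℕ → Bool} (hL : L.Pairwise (· ≥ ·))
    (h₁ : l₁.Pairwise (· ≥ ·)) (hperm : L ~ l₁ ++ l₂) (hp₁ : ∀ x ∈ l₁, p x)
    (hp₂ : ∀ x ∈ l₂, ¬p x) : L.filter p = l₁ := by
  refine ((hperm.filter p).trans ?_).eq_of_pairwise' (hL.filter p) h₁
  rw [filter_append, filter_eq_self.mpr hp₁, filter_eq_nil_iff.mpr hp₂, append_nil]

lemma map_div_two_filter_mod_two (l : List ℕ) (r : ℕ) :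
    ((l.filter (· % 2 = r)).map (· / 2)).map (2 * · + r) = l.filter (· % 2 = r) := by
  rw [map_map]
  refine (map_congr_left fun x hx => ?_).trans (map_id _)
  simp only [mem_filter, decide_eq_true_eq] at hx
  simp only [Function.comp_apply, id_eq]
  omega

end List

open List

section Conjugate

def conjugate (e : List ℕ) : List ℕ :=
  (range (e.headD 0)).map fun j => e.countP (j < ·)

@[simp]
lemma length_conjugate (e : List ℕ) : (conjugate e).length = e.headD 0 := by
  simp [conjugate]

lemma antitone_countP_lt (e : List ℕ) : Antitone fun j => e.countP (j < ·) :=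
  fun _ _ hij => countP_mono_left fun x _ h => by simp only [decide_eq_true_eq] at *; omega

lemma isPartitionList_conjugate (e : List ℕ) : IsPartitionList (conjugate e) := by
  refine ⟨pairwise_map.mpr (pairwise_lt_range.imp fun h => antitone_countP_lt e h.le), ?_⟩
  simp only [conjugate, mem_map, mem_range, forall_exists_index, and_imp]
  rintro _ j hj rfl
  cases e with
  | nil => simp at hj
  | cons y ys => exact countP_pos_iff.mpr ⟨y, mem_cons_self, by simpa using hj⟩

lemma lt_getD_iff_lt_countP {e : List ℕ} (he : e.Pairwise (· ≥ ·)) (i j : ℕ) :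
    j < e.getD i 0 ↔ i < e.countP (j < ·) := by
  induction e generalizing i with
  | nil => simp
  | cons x xs ih =>
    by_cases hjx : j < x
    · cases i with
      | zero => simp [hjx]
      | succ i => rw [getD_cons_succ, ih (pairwise_cons.mp he).2 i, countP_cons]; simp [hjx]
    · have h0 : (x :: xs).countP (j < ·) = 0 := countP_eq_zero.mpr fun y hy => by
        have := le_headD_of_mem he hy
        simp only [headD_cons, decide_eq_true_eq] at this ⊢
        omega
      simpa [h0] using (getD_le_headD he i).trans (by simpa using hjx)

lemma headD_conjugate {e : List ℕ} (he : ∀ x ∈ e, 0 < x) : (conjugate e).headD 0 = e.length := by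
  cases e with
  | nil => rfl
  | cons y ys =>
    obtain ⟨m, rfl⟩ : ∃ m, y = m + 1 := ⟨y - 1, by have := he y mem_cons_self; omega⟩
    simp only [conjugate, headD_cons, range_succ_eq_map, map_cons]
    exact countP_eq_length.mpr fun x hx => by simpa using he x hx

lemma conjugate_conjugate {e : List ℕ} (he : IsPartitionList e) : conjugate (conjugate e) = e := by
  apply ext_getElem (by rw [length_conjugate, headD_conjugate he.2])
  intro i _ hi
  simp only [conjugate, getElem_map, getElem_range, countP_map]
  have hcongr : ∀ j ∈ range (e.headD 0), i < e.countP (j < ·) ↔ j < e[i] := fun j _ => by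
    rw [← lt_getD_iff_lt_countP he.1, getD_eq_getElem _ _ hi]
  rw [countP_congr (q := (· < e[i])) (by simpa using hcongr), countP_lt_range]
  exact min_eq_left (le_headD_of_mem he.1 (getElem_mem hi))

lemma length_conjugate_le_iff {e : List ℕ} (he : e.Pairwise (· ≥ ·)) {N : ℕ} :
    (conjugate e).length ≤ N ↔ ∀ x ∈ e, x ≤ N := by
  rw [length_conjugate, headD_le_iff he]

lemma forall_mem_conjugate_le_iff {e : List ℕ} (he : IsPartitionList e) {N : ℕ} :
    (∀ x ∈ conjugate e, x ≤ N) ↔ e.length ≤ N := by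
  rw [← length_conjugate_le_iff (isPartitionList_conjugate e).1, conjugate_conjugate he]

lemma sum_map_range_countP {e : List ℕ} {N : ℕ} (h : ∀ x ∈ e, x ≤ N) :
    ((range N).map fun j => e.countP (j < ·)).sum = e.sum := by
  induction e with
  | nil => simp
  | cons x e ih =>
    have hx : ((range N).map fun j => if j < x then 1 else 0).sum = x := by
      simpa [countP_lt_range, h x mem_cons_self] using sum_map_ite_eq_countP (range N) (· < x)
    simp only [countP_cons, decide_eq_true_eq, sum_map_add, sum_cons]
    rw [ih fun y hy => h y (mem_cons_of_mem x hy), hx, add_comm]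

lemma sum_conjugate {e : List ℕ} (he : e.Pairwise (· ≥ ·)) : (conjugate e).sum = e.sum :=
  sum_map_range_countP fun _ => le_headD_of_mem he

lemma map_range_countP_eq_conjugate_append {e : List ℕ} (he : e.Pairwise (· ≥ ·)) {N : ℕ}
    (hN : e.headD 0 ≤ N) :
    (range N).map (fun j => e.countP (j < ·)) = conjugate e ++ replicate (N - e.headD 0) 0 := by
  obtain ⟨t, rfl⟩ := Nat.exists_eq_add_of_le hN
  rw [range_add, map_append, map_map, Nat.add_sub_cancel_left]
  congr 1
  refine eq_replicate_iff.mpr ⟨by simp, fun y hy => ?_⟩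
  obtain ⟨j, -, rfl⟩ := mem_map.mp hy
  exact countP_eq_zero.mpr fun x hx => by
    have := le_headD_of_mem he hx
    simp only [decide_eq_true_eq]
    omega

lemma conjugate_cons {x : ℕ} {e : List ℕ} (he : e.Pairwise (· ≥ ·)) (hx : ∀ y ∈ e, y ≤ x) :
    conjugate (x :: e) = (conjugate e ++ replicate (x - e.headD 0) 0).map (· + 1) := by
  rw [← map_range_countP_eq_conjugate_append he ((headD_le_iff he).mpr hx), map_map, conjugate,
    headD_cons]
  refine map_congr_left fun j hj => ?_
  simp [mem_range.mp hj]

lemma countP_odd_map_succ_add (l : List ℕ) :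
    (l.map (· + 1)).countP (· % 2 = 1) + l.countP (· % 2 = 1) = l.length := by
  rw [countP_map, length_eq_countP_add_countP (· % 2 = 1) (l := l), add_comm]
  congr 1
  exact countP_congr fun y _ => by simp; omega

lemma countP_odd_conjugate {e : List ℕ} (he : e.Pairwise (· ≥ ·)) :
    ((conjugate e).countP (· % 2 = 1) : ℤ) = (e.map ((↑) : ℕ → ℤ)).alternatingSum := by
  induction e with
  | nil => simp [conjugate]
  | cons x e ih =>
    obtain ⟨hx, he'⟩ := pairwise_cons.mp he
    -- Adding the part `x` on top adds `1` to each of the `x` columns, flipping their parities.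
    have h := countP_odd_map_succ_add (conjugate e ++ replicate (x - e.headD 0) 0)
    rw [← conjugate_cons he' hx, countP_append, length_append, length_replicate,
      length_conjugate, countP_replicate] at h
    simp only [Nat.zero_mod, zero_ne_one, decide_false, Bool.false_eq_true, ↓reduceIte,
      add_zero] at h
    rw [map_cons, alternatingSum_cons, ← ih he']
    have := (headD_le_iff he').mpr hx
    omega

end Conjugate

section SplitParity

def splitParity (f : List ℕ) : List ℕ × List ℕ :=
  ((f.filter (· % 2 = 0)).map (· / 2), ((f.filter (· % 2 = 1)).map (· / 2)).filter (0 < ·))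

/-- Inverse of `splitParity` on partitions with exactly `c` odd parts: the odd parts `1` dropped
by `splitParity` are restored as `c - v.length` zeros before doubling. -/
def mergeParity (c : ℕ) (p : List ℕ × List ℕ) : List ℕ :=
  (p.1.map (2 * ·) ++ (p.2 ++ replicate (c - p.2.length) 0).map (2 * · + 1)).mergeSort
    fun x y => y ≤ x

variable {c : ℕ} {f u v : List ℕ}

lemma splitParity_fst_length_add (f : List ℕ) :
    (splitParity f).1.length + f.countP (· % 2 = 1) = f.length := by
  rw [length_eq_countP_add_countP (· % 2 = 0) (l := f), splitParity, length_map,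
    ← countP_eq_length_filter]
  congr 1
  exact countP_congr fun x _ => by simp

lemma splitParity_snd_length_le (f : List ℕ) :
    (splitParity f).2.length ≤ f.countP (· % 2 = 1) :=
  (length_filter_le _ _).trans (by rw [length_map, countP_eq_length_filter])

lemma sum_eq_splitParity (f : List ℕ) :
    f.sum = 2 * ((splitParity f).1.sum + (splitParity f).2.sum) + f.countP (· % 2 = 1) := by
  induction f with
  | nil => simp [splitParity]
  | cons x f ih =>
    rcases Nat.mod_two_eq_zero_or_one x with hx | hx
    · simp [splitParity, hx] at ih ⊢
      omega
    · by_cases h0 : 0 < x / 2 <;> simp [splitParity, hx, h0] at ih ⊢ <;> omega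

lemma isPartitionList_splitParity_fst (hf : IsPartitionList f) :
    IsPartitionList (splitParity f).1 := by
  refine ⟨(hf.1.filter _).map _ fun _ _ h => Nat.div_le_div_right h, ?_⟩
  simp only [splitParity, mem_map, mem_filter, decide_eq_true_eq, forall_exists_index, and_imp]
  rintro _ x hx heven rfl
  have := hf.2 x hx
  omega

lemma isPartitionList_splitParity_snd (hf : f.Pairwise (· ≥ ·)) :
    IsPartitionList (splitParity f).2 := by
  refine ⟨Pairwise.filter _ ?_, fun x hx => by simpa using (mem_filter.mp hx).2⟩
  exact (hf.filter _).map _ fun _ _ h => Nat.div_le_div_right h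

lemma isPartitionList_mergeParity (hu : ∀ x ∈ u, 0 < x) :
    IsPartitionList (mergeParity c (u, v)) := by
  refine ⟨pairwise_ge_mergeSort _, fun x hx => ?_⟩
  rcases mem_append.mp ((mergeSort_perm _ _).mem_iff.mp hx) with h | h <;>
    obtain ⟨y, hy, rfl⟩ := mem_map.mp h
  · have := hu y hy
    omega
  · omega

lemma countP_odd_mergeParity (hv : v.length ≤ c) :
    (mergeParity c (u, v)).countP (· % 2 = 1) = c := by
  rw [mergeParity, (mergeSort_perm _ _).countP_eq, countP_append, countP_map, countP_map,
    countP_eq_zero.mpr (by simp), countP_eq_length.mpr (by simp)]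
  simp
  omega

lemma splitParity_mergeParity (hu : IsPartitionList u) (hv : IsPartitionList v) :
    splitParity (mergeParity c (u, v)) = (u, v) := by
  set w := v ++ replicate (c - v.length) 0
  have hw : w.Pairwise (· ≥ ·) := pairwise_append.mpr
    ⟨hv.1, pairwise_replicate.mpr (Or.inr le_rfl), fun _ _ _ hy => by simp [eq_of_mem_replicate hy]⟩
  have hsorted := pairwise_ge_mergeSort (u.map (2 * ·) ++ w.map (2 * · + 1))
  have hperm := mergeSort_perm (u.map (2 * ·) ++ w.map (2 * · + 1)) fun x y => y ≤ x
  have hevens : (mergeParity c (u, v)).filter (· % 2 = 0) = u.map (2 * ·) :=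
    filter_eq_of_perm_append hsorted (hu.1.map _ fun _ _ h => by omega) hperm (by simp) (by simp)
  have hodds : (mergeParity c (u, v)).filter (· % 2 = 1) = w.map (2 * · + 1) :=
    filter_eq_of_perm_append hsorted (hw.map _ fun _ _ h => by omega)
      (hperm.trans perm_append_comm) (by simp) (by simp)
  have hv0 : v.filter (0 < ·) = v := filter_eq_self.mpr fun x hx => by simpa using hv.2 x hx
  have hhalf : ∀ x, (2 * x + 1) / 2 = x := by omega
  simp [splitParity, hevens, hodds, w, filter_append, hv0, hhalf, Function.comp_def]

lemma mergeParity_splitParity (hf : f.Pairwise (· ≥ ·)) (hc : f.countP (· % 2 = 1) = c) :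
    mergeParity c (splitParity f) = f := by
  set w := (f.filter (· % 2 = 1)).map (· / 2)
  have hw : w.Pairwise (· ≥ ·) := (hf.filter _).map _ fun _ _ h => Nat.div_le_div_right h
  have hwc : w.length = c := by rw [length_map, ← countP_eq_length_filter, hc]
  have hpad : w.filter (0 < ·) ++ replicate (c - (w.filter (0 < ·)).length) 0 = w := by
    rw [← hwc]
    exact filter_pos_append_replicate hw
  have hsplit : f.filter (· % 2 = 0) ++ f.filter (· % 2 = 1) ~ f := by
    have hodd : f.filter (· % 2 = 1) = f.filter fun x => !decide (x % 2 = 0) :=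
      filter_congr fun x _ => by rcases Nat.mod_two_eq_zero_or_one x with h | h <;> simp [h]
    exact hodd ▸ filter_append_perm _ f
  have hevens : ((f.filter (· % 2 = 0)).map (· / 2)).map (2 * ·) = f.filter (· % 2 = 0) := by
    simpa using map_div_two_filter_mod_two f 0
  rw [mergeParity, splitParity, hpad, hevens, map_div_two_filter_mod_two f 1]
  exact ((mergeSort_perm _ _).trans hsplit).eq_of_pairwise' (pairwise_ge_mergeSort _) hf

end SplitParity

section ABSequence

lemma entry_add_one_eq_getElem {d : List ℕ} {i : ℕ} (h : i < d.length) :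
    entry d (i + 1) = d[i] := by
  rw [entry, Nat.add_sub_cancel, getD_eq_getElem _ _ h]

lemma forall_entry_pos_iff (d : List ℕ) :
    (∀ i, 1 ≤ i → i ≤ d.length → 1 ≤ entry d i) ↔ ∀ x ∈ d, 0 < x := by
  refine ⟨fun h x hx => ?_, fun h i h₁ h₂ => ?_⟩
  · obtain ⟨i, hi, rfl⟩ := mem_iff_getElem.mp hx
    have := h (i + 1) (by omega) (by omega)
    rwa [entry_add_one_eq_getElem hi] at this
  · obtain ⟨i, rfl⟩ := Nat.exists_eq_add_of_le' h₁
    rw [entry_add_one_eq_getElem (by omega)]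
    exact h _ (getElem_mem _)

lemma forall_entry_eq_iff (d : List ℕ) (a b : ℕ) :
    (b ≤ d.length ∧ ∀ i, 1 ≤ i → i ≤ b → entry d i = a + i) ↔ d.take b = range' (a + 1) b := by
  constructor
  · rintro ⟨hb, h⟩
    refine ext_getElem (by simp [hb]) fun i _ h₂ => ?_
    have hi : i < b := by simpa using h₂
    rw [getElem_take, ← entry_add_one_eq_getElem (by omega), h (i + 1) (by omega) hi,
      getElem_range']
    omega
  · intro h
    have hb : b ≤ d.length := by simpa using congrArg length h
    refine ⟨hb, fun i h₁ h₂ => ?_⟩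
    obtain ⟨i, rfl⟩ := Nat.exists_eq_add_of_le' h₁
    have := getElem_of_eq h (i := i) (by simp; omega)
    rw [getElem_take, getElem_range'] at this
    rw [entry_add_one_eq_getElem (by omega), this]
    omega

lemma forall_entry_antitone_iff (d : List ℕ) {b : ℕ} (hb : 1 ≤ b) :
    (∀ i j, b ≤ i → i ≤ j → j ≤ d.length → entry d j ≤ entry d i) ↔
      (d.drop (b - 1)).Pairwise (· ≥ ·) := by
  obtain ⟨c, rfl⟩ := Nat.exists_eq_add_of_le' hb
  rw [Nat.add_sub_cancel, pairwise_iff_getElem]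
  simp only [length_drop, getElem_drop]
  constructor
  · intro h i j hi hj hij
    have := h (c + i + 1) (c + j + 1) (by omega) (by omega) (by omega)
    rwa [entry_add_one_eq_getElem, entry_add_one_eq_getElem] at this
  · intro h i j hi hij hj
    obtain ⟨i, rfl⟩ := Nat.exists_eq_add_of_le' (show 1 ≤ i by omega)
    obtain ⟨j, rfl⟩ := Nat.exists_eq_add_of_le' (show 1 ≤ j by omega)
    rw [entry_add_one_eq_getElem (by omega), entry_add_one_eq_getElem (by omega)]
    rcases hij.eq_or_lt with hij | hij
    · simp [show i = j by omega]
    · have := h (i - c) (j - c) (by omega) (by omega) (by omega)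
      simpa [show c + (i - c) = i by omega, show c + (j - c) = j by omega] using this

lemma alternatingSum_eq_sum_range (d : List ℕ) :
    (d.map ((↑) : ℕ → ℤ)).alternatingSum =
      ∑ j ∈ Finset.range d.length, (-1) ^ j * (d.getD j 0 : ℤ) := by
  induction d with
  | nil => simp
  | cons x d ih =>
    rw [map_cons, alternatingSum_cons, ih, length_cons, Finset.sum_range_succ']
    simp [pow_succ, Finset.sum_neg_distrib, sub_eq_add_neg, add_comm]

lemma altSum_length (d : List ℕ) :
    altSum d d.length = -(d.map ((↑) : ℕ → ℤ)).alternatingSum := by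
  rw [altSum, alternatingSum_eq_sum_range, ← Finset.Ico_add_one_right_eq_Icc,
    Finset.sum_Ico_eq_sum_range, ← Finset.sum_neg_distrib, Nat.add_sub_cancel]
  refine Finset.sum_congr rfl fun j _ => ?_
  simp [entry, pow_add]

lemma isABSeq_iff {a b : ℕ} (hb : 1 ≤ b) {d : List ℕ} :
    IsABSeq a b d ↔ d.take b = range' (a + 1) b ∧ (∀ x ∈ d, 0 < x) ∧
      (d.drop (b - 1)).Pairwise (· ≥ ·) ∧ (d.map ((↑) : ℕ → ℤ)).alternatingSum = 0 := by
  rw [IsABSeq, ← forall_entry_eq_iff, forall_entry_pos_iff, forall_entry_antitone_iff d hb,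
    altSum_length, neg_eq_zero]
  tauto

lemma IsABSeq.eq_append {a b : ℕ} {d : List ℕ} (hd : IsABSeq a b d) :
    d = range' (a + 1) b ++ d.drop b := by
  rw [← ((isABSeq_iff hd.1).mp hd).1, take_append_drop]

lemma isABSeq_append_iff {a b : ℕ} (hb : 1 ≤ b) {e : List ℕ} :
    IsABSeq a b (range' (a + 1) b ++ e) ↔ IsPartitionList e ∧ (∀ x ∈ e, x ≤ a + b) ∧
      ((range' (a + 1) b).map ((↑) : ℕ → ℤ)).alternatingSum +
        (-1) ^ b * (e.map ((↑) : ℕ → ℤ)).alternatingSum = 0 := by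
  obtain ⟨c, rfl⟩ := Nat.exists_eq_add_of_le' hb
  have hdrop : (range' (a + 1) (c + 1) ++ e).drop c = (a + c + 1) :: e := by
    rw [range'_concat, append_assoc, drop_left' (by simp)]
    simp [Nat.add_right_comm]
  rw [isABSeq_iff hb, take_left' (by simp), Nat.add_sub_cancel, hdrop, pairwise_cons, map_append,
    alternatingSum_append, smul_eq_mul, length_map, length_range']
  simp only [mem_append, mem_range'_1, true_and, IsPartitionList]
  constructor
  · rintro ⟨hpos, ⟨hle, hsorted⟩, halt⟩
    exact ⟨⟨hsorted, fun x hx => hpos x (Or.inr hx)⟩, fun x hx => by have := hle x hx; omega, halt⟩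
  · rintro ⟨⟨hsorted, hpos⟩, hle, halt⟩
    refine ⟨fun x hx => hx.elim (fun h => by omega) (hpos x), ⟨fun x hx => ?_, hsorted⟩, halt⟩
    have := hle x hx
    omega

lemma alternatingSum_range'_odd (s m : ℕ) :
    ((range' s (2 * m + 1)).map ((↑) : ℕ → ℤ)).alternatingSum = ((s + m : ℕ) : ℤ) := by
  induction m generalizing s with
  | zero => simp
  | succ m ih =>
    rw [show 2 * (m + 1) + 1 = 2 * m + 1 + 1 + 1 by ring, range'_succ, range'_succ, map_cons,
      map_cons, alternatingSum_cons_cons, ih]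
    push_cast
    ring

lemma sum_range'_odd (s m : ℕ) : (range' s (2 * m + 1)).sum = (2 * m + 1) * (s + m) := by
  induction m generalizing s with
  | zero => simp
  | succ m ih =>
    rw [show 2 * (m + 1) + 1 = 2 * m + 1 + 1 + 1 by ring, range'_succ, range'_succ, sum_cons,
      sum_cons, ih]
    ring

end ABSequence

section Counting

lemma ncard_setOf_and_eq_of_involutive {α : Type*} {S P Q : α → Prop} (σ : α → α)
    (hS : ∀ x, S x → S (σ x)) (hσ : ∀ x, S x → σ (σ x) = x)
    (hPQ : ∀ x, S x → (P x ↔ Q (σ x))) :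
    {x | S x ∧ P x}.ncard = {x | S x ∧ Q x}.ncard := by
  refine (Set.InvOn.bijOn (f := σ) (f' := σ) ⟨fun x hx => hσ x hx.1, fun x hx => hσ x hx.1⟩
    ?_ ?_).ncard_eq
  · rintro x ⟨hx, hP⟩
    exact ⟨hS x hx, (hPQ x hx).1 hP⟩
  · rintro x ⟨hx, hQ⟩
    exact ⟨hS x hx, (hPQ _ (hS x hx)).2 ((hσ x hx).symm ▸ hQ)⟩

variable (R : ℕ → Prop)

lemma ncard_isABSeq_odd (a m : ℕ) :
    {d | IsABSeq a (2 * m + 1) d ∧ R d.sum}.ncard =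
      {e | IsPartitionList e ∧ (∀ x ∈ e, x ≤ m + (a + (m + 1))) ∧
        (e.map ((↑) : ℕ → ℤ)).alternatingSum = ((a + (m + 1) : ℕ) : ℤ) ∧
        R ((2 * m + 1) * (a + (m + 1)) + e.sum)}.ncard := by
  set p := range' (a + 1) (2 * m + 1)
  have hiff : ∀ e : List ℕ, IsABSeq a (2 * m + 1) (p ++ e) ↔
      IsPartitionList e ∧ (∀ x ∈ e, x ≤ m + (a + (m + 1))) ∧
        (e.map ((↑) : ℕ → ℤ)).alternatingSum = ((a + (m + 1) : ℕ) : ℤ) := fun e => by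
    rw [isABSeq_append_iff (by omega), alternatingSum_range'_odd, Odd.neg_one_pow ⟨m, rfl⟩,
      show a + (2 * m + 1) = m + (a + (m + 1)) by ring, show a + 1 + m = a + (m + 1) by ring]
    constructor <;> rintro ⟨h₁, h₂, h₃⟩ <;> exact ⟨h₁, h₂, by linarith⟩
  have hsum : ∀ e, (p ++ e).sum = (2 * m + 1) * (a + (m + 1)) + e.sum := fun e => by
    rw [sum_append, sum_range'_odd]
    ring
  symm
  rw [← Set.ncard_image_of_injective _ (append_right_injective p)]
  congr 1
  ext d
  simp only [Set.mem_ofPred_eq, Set.mem_image]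
  constructor
  · rintro ⟨e, ⟨h₁, h₂, h₃, hR⟩, rfl⟩
    exact ⟨(hiff e).mpr ⟨h₁, h₂, h₃⟩, by rwa [hsum]⟩
  · rintro ⟨hd, hR⟩
    have hde : d = p ++ d.drop (2 * m + 1) := hd.eq_append
    rw [hde, hiff] at hd
    rw [hde, hsum] at hR
    exact ⟨_, ⟨hd.1, hd.2.1, hd.2.2, hR⟩, hde.symm⟩

lemma ncard_conjugate (N c : ℕ) :
    {e | IsPartitionList e ∧ (∀ x ∈ e, x ≤ N) ∧
        (e.map ((↑) : ℕ → ℤ)).alternatingSum = (c : ℤ) ∧ R e.sum}.ncard =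
      {f | IsPartitionList f ∧ f.length ≤ N ∧ f.countP (· % 2 = 1) = c ∧ R f.sum}.ncard := by
  refine ncard_setOf_and_eq_of_involutive conjugate (fun e _ => isPartitionList_conjugate e)
    (fun e he => conjugate_conjugate he) fun e he => ?_
  rw [length_conjugate_le_iff he.1, ← countP_odd_conjugate he.1, sum_conjugate he.1, Nat.cast_inj]

lemma ncard_splitParity (L c : ℕ) :
    {f | IsPartitionList f ∧ f.length ≤ L + c ∧ f.countP (· % 2 = 1) = c ∧ R f.sum}.ncard =
      {p : List ℕ × List ℕ | (IsPartitionList p.1 ∧ IsPartitionList p.2) ∧ p.1.length ≤ L ∧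
        p.2.length ≤ c ∧ R (2 * (p.1.sum + p.2.sum) + c)}.ncard := by
  refine (Set.InvOn.bijOn (f := splitParity) (f' := mergeParity c) ⟨?_, ?_⟩ ?_ ?_).ncard_eq
  · rintro f ⟨hf, -, hc, -⟩
    exact mergeParity_splitParity hf.1 hc
  · rintro ⟨u, v⟩ ⟨⟨hu, hv⟩, -⟩
    exact splitParity_mergeParity hu hv
  · rintro f ⟨hf, hL, hc, hR⟩
    have hlen := splitParity_fst_length_add f
    refine ⟨⟨isPartitionList_splitParity_fst hf, isPartitionList_splitParity_snd hf.1⟩, by omega,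
      hc ▸ splitParity_snd_length_le f, ?_⟩
    rwa [sum_eq_splitParity f, hc] at hR
  · rintro ⟨u, v⟩ ⟨⟨hu, hv⟩, hL, hc, hR⟩
    have hsplit : splitParity (mergeParity c (u, v)) = (u, v) := splitParity_mergeParity hu hv
    have hodd : (mergeParity c (u, v)).countP (· % 2 = 1) = c := countP_odd_mergeParity hc
    have hlen := splitParity_fst_length_add (mergeParity c (u, v))
    rw [hsplit, hodd] at hlen
    refine ⟨isPartitionList_mergeParity hu.2, by simp only at hL hlen; omega, hodd, ?_⟩
    rwa [sum_eq_splitParity, hsplit, hodd]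

lemma ncard_conjugate_pair (L M : ℕ) :
    {p : List ℕ × List ℕ | (IsPartitionList p.1 ∧ IsPartitionList p.2) ∧ p.1.length ≤ L ∧
        p.2.length ≤ M ∧ R (p.1.sum + p.2.sum)}.ncard =
      {p : List ℕ × List ℕ | (IsPartitionList p.1 ∧ IsPartitionList p.2) ∧ (∀ x ∈ p.1, x ≤ L) ∧
        (∀ x ∈ p.2, x ≤ M) ∧ R (p.1.sum + p.2.sum)}.ncard := by
  apply ncard_setOf_and_eq_of_involutive (Prod.map conjugate conjugate)
  · exact fun p _ => ⟨isPartitionList_conjugate _, isPartitionList_conjugate _⟩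
  · exact fun p hp => Prod.ext (conjugate_conjugate hp.1) (conjugate_conjugate hp.2)
  intro p hp
  rw [Prod.map_fst, Prod.map_snd, forall_mem_conjugate_le_iff hp.1,
    forall_mem_conjugate_le_iff hp.2, sum_conjugate hp.1.1, sum_conjugate hp.2.1]

end Counting

/-- Odd-`b` coefficient extraction of Theorem 2.1: the number of `(a, 2k−1)`-sequences `Δ`
with `|Δ| = 2n` equals the number of pairs `(μ, ν)` of partitions with parts of `μ` at most
`k − 1`, parts of `ν` at most `a + k`, and `|μ| + |ν| + k(a + k) = n`. -/
theorem abseq_odd_count (a k n : ℕ) (hk : 1 ≤ k) :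
    Set.ncard {d : List ℕ | IsABSeq a (2 * k - 1) d ∧ d.sum = 2 * n} =
    Set.ncard {p : List ℕ × List ℕ | IsPartitionList p.1 ∧ IsPartitionList p.2 ∧
      (∀ x ∈ p.1, x ≤ k - 1) ∧ (∀ x ∈ p.2, x ≤ a + k) ∧
      p.1.sum + p.2.sum + k * (a + k) = n} := by
  obtain ⟨m, rfl⟩ := Nat.exists_eq_add_of_le' hk
  rw [show 2 * (m + 1) - 1 = 2 * m + 1 by omega, Nat.add_sub_cancel]
  set c := a + (m + 1)
  let R : ℕ → Prop := fun s => (2 * m + 1) * c + s = 2 * n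
  have hR : ∀ s, R (2 * s + c) ↔ s + (m + 1) * c = n := fun s => by
    simp only [R]
    rw [show (2 * m + 1) * c + (2 * s + c) = 2 * (s + (m + 1) * c) by ring]
    omega
  calc _ = _ := ncard_isABSeq_odd (· = 2 * n) a m
    _ = _ := ncard_conjugate R _ _
    _ = _ := ncard_splitParity R m c
    _ = _ := ncard_conjugate_pair (fun s => R (2 * s + c)) m c
    _ = _ := by simp only [hR, and_assoc]
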